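/- arXiv:2204.11316 — 2 statements merged into one kernel-verified Lean document; each statement's English description precedes it below -/
import Mathlib

section
/- Let Y be a Poisson random variable with mean M > 0 and let H_n = ∑_{i=1}^n 1/i be the n-th harmonic number (H₀ = 0). Then Var(H_Y) ≤ 2/M. -/
/-!
The Poincaré inequality `Var f(Y) ≤ M 𝔼[(f(Y+1) - f(Y))²]` for `Y ~ Poisson(M)`, applied
to `f = H`. Write `Var f(Y) = ∑_{j<k} p_j p_k (f_k - f_j)²`; Cauchy–Schwarz on the telescoping
sum `f_k - f_j = ∑_{j≤i<k} Df_i` gives `(f_k - f_j)² ≤ (k - j) ∑_{j≤i<k} Df_i²`, and exchanging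
the sums leaves the kernel `∑_{j≤i<k} p_j p_k (k - j)`, which equals `M p_i` for Poisson
weights. The exchanges are done in `ℝ≥0∞`, where no summability is needed. For `f = H` we
have `Df_k = 1/(k+1)`, and `M² p_k/(k+1)² = (k+2)/(k+1) p_{k+2} ≤ 2 p_{k+2}` gives `2/M`.
-/

noncomputable def harmonicR (n : ℕ) : ℝ := ∑ i ∈ Finset.range n, (1 : ℝ) / (i + 1)

open Finset ENNReal

section ProbabilityWeights

variable {ι : Type*} {p f : ι → ℝ}

lemma summable_mul_of_summable_mul_sq (hp : ∀ i, 0 ≤ p i) (hp1 : Summable p)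
    (hf : Summable fun i ↦ p i * f i ^ 2) : Summable fun i ↦ p i * f i := by
  refine (hp1.add hf).of_norm_bounded fun i ↦ ?_
  rw [norm_mul, Real.norm_of_nonneg (hp i)]
  have : ‖f i‖ ≤ 1 + f i ^ 2 := by
    rw [Real.norm_eq_abs]; nlinarith [abs_nonneg (f i), sq_abs (f i)]
  nlinarith [hp i]

lemma hasSum_mul_sub_sq (hp : ∀ i, 0 ≤ p i) (hp1 : HasSum p 1)
    (hf : Summable fun i ↦ p i * f i ^ 2) (c : ℝ) :
    HasSum (fun i ↦ p i * (f i - c) ^ 2)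
      ((∑' i, p i * f i ^ 2) - 2 * c * ∑' i, p i * f i + c ^ 2) := by
  have hpf := (summable_mul_of_summable_mul_sq hp hp1.summable hf).hasSum
  have := ((hf.hasSum.sub (hpf.mul_left (2 * c))).add (hp1.mul_left (c ^ 2))).congr_fun
    (g := fun i ↦ p i * (f i - c) ^ 2) fun i ↦ by ring
  rwa [mul_one] at this

lemma ofReal_two_mul_tsum_mul_sub_sq (hp : ∀ i, 0 ≤ p i) (hp1 : HasSum p 1)
    (hf : Summable fun i ↦ p i * f i ^ 2) :
    ENNReal.ofReal (2 * ∑' k, p k * (f k - ∑' i, p i * f i) ^ 2) =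
      ∑' j, ∑' k, ENNReal.ofReal (p j * p k * (f k - f j) ^ 2) := by
  have hpf := (summable_mul_of_summable_mul_sq hp hp1.summable hf).hasSum
  have hpf2 := hf.hasSum
  set μ := ∑' i, p i * f i
  set m₂ := ∑' i, p i * f i ^ 2
  have hinner (j : ι) : HasSum (fun k ↦ p j * p k * (f k - f j) ^ 2)
      (p j * (m₂ - 2 * f j * μ + f j ^ 2)) := by
    simpa only [mul_assoc] using (hasSum_mul_sub_sq hp hp1 hf (f j)).mul_left (p j)
  have houter : HasSum (fun j ↦ p j * (m₂ - 2 * f j * μ + f j ^ 2)) (2 * (m₂ - μ ^ 2)) := by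
    have := (((hp1.mul_right m₂).sub (hpf.mul_left (2 * μ))).add hpf2).congr_fun
      (g := fun j ↦ p j * (m₂ - 2 * f j * μ + f j ^ 2)) fun j ↦ by ring
    rwa [show 1 * m₂ - 2 * μ * μ + m₂ = 2 * (m₂ - μ ^ 2) by ring] at this
  rw [(hasSum_mul_sub_sq hp hp1 hf μ).tsum_eq,
    show m₂ - 2 * μ * μ + μ ^ 2 = m₂ - μ ^ 2 by ring, ← houter.tsum_eq,
    ENNReal.ofReal_tsum_of_nonneg _ houter.summable]
  · refine tsum_congr fun j ↦ ?_
    rw [← (hinner j).tsum_eq, ENNReal.ofReal_tsum_of_nonneg _ (hinner j).summable]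
    exact fun k ↦ by have := hp j; have := hp k; positivity
  · intro j
    rw [← (hinner j).tsum_eq]
    exact tsum_nonneg fun k ↦ by have := hp j; have := hp k; positivity

end ProbabilityWeights

lemma ENNReal.tsum_tsum_eq_two_mul_tsum_tsum_ite_lt {α : Type*} [LinearOrder α]
    {G : α → α → ℝ≥0∞} (hsymm : ∀ j k, G j k = G k j) (hdiag : ∀ j, G j j = 0) :
    ∑' j, ∑' k, G j k = 2 * ∑' j, ∑' k, if j < k then G j k else 0 := by
  have hsplit (j k : α) :
      G j k = (if j < k then G j k else 0) + (if k < j then G k j else 0) := by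
    rcases lt_trichotomy j k with h | rfl | h
    · simp [h, h.not_gt]
    · simp [hdiag]
    · simp [h, h.not_gt, hsymm j k]
  calc ∑' j, ∑' k, G j k
      = ∑' j, ∑' k, ((if j < k then G j k else 0) + (if k < j then G k j else 0)) :=
        tsum_congr fun j ↦ tsum_congr fun k ↦ hsplit j k
    _ = _ := by
      simp only [ENNReal.tsum_add]
      rw [ENNReal.tsum_comm (f := fun j k ↦ if k < j then G k j else 0), two_mul]

lemma sq_sub_le_mul_sum_Ico_sq_sub (f : ℕ → ℝ) {j k : ℕ} (hjk : j ≤ k) :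
    (f k - f j) ^ 2 ≤ (k - j : ℕ) * ∑ i ∈ Ico j k, (f (i + 1) - f i) ^ 2 := by
  rw [← Finset.sum_Ico_sub f hjk, ← Nat.card_Ico]
  exact sq_sum_le_card_mul_sum_sq

lemma ENNReal.tsum_ite_le_eq_tsum_add (g : ℕ → ℝ≥0∞) (n : ℕ) :
    ∑' k, (if n ≤ k then g k else 0) = ∑' t, g (t + n) := by
  rw [← ENNReal.summable.sum_add_tsum_nat_add' (k := n),
    Finset.sum_eq_zero fun i hi ↦ if_neg (not_le.mpr (Finset.mem_range.mp hi)), zero_add]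
  simp

lemma ENNReal.tsum_ite_le_eq_sum_range (g : ℕ → ℝ≥0∞) (n : ℕ) :
    ∑' k, (if k ≤ n then g k else 0) = ∑ k ∈ range (n + 1), g k := by
  rw [tsum_eq_sum (s := range (n + 1)) fun k hk ↦ if_neg (by simp at hk; omega)]
  exact Finset.sum_congr rfl fun k hk ↦ if_pos (by simp at hk; omega)

lemma ENNReal.tsum_tsum_sum_Ico_comm (F : ℕ → ℕ → ℕ → ℝ≥0∞) :
    ∑' j, ∑' k, ∑ i ∈ Ico j k, F j k i =
      ∑' i, ∑ j ∈ range (i + 1), ∑' t, F j (t + (i + 1)) i := by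
  have hIco (j k : ℕ) : ∑ i ∈ Ico j k, F j k i =
      ∑' i, if j ≤ i ∧ i + 1 ≤ k then F j k i else 0 := by
    rw [tsum_eq_sum (s := Ico j k) fun i hi ↦ if_neg (by simp at hi; omega)]
    exact Finset.sum_congr rfl fun i hi ↦ (if_pos (by simp at hi; omega)).symm
  have hsplit (i j : ℕ) : ∑' k, (if j ≤ i ∧ i + 1 ≤ k then F j k i else 0) =
      if j ≤ i then ∑' k, (if i + 1 ≤ k then F j k i else 0) else 0 := by
    split_ifs with hj <;> simp [hj]
  calc ∑' j, ∑' k, ∑ i ∈ Ico j k, F j k i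
      = ∑' j, ∑' i, ∑' k, if j ≤ i ∧ i + 1 ≤ k then F j k i else 0 := by
        simp only [hIco]; exact tsum_congr fun j ↦ ENNReal.tsum_comm
    _ = ∑' i, ∑' j,
          if j ≤ i then ∑' k, (if i + 1 ≤ k then F j k i else 0) else 0 := by
        rw [ENNReal.tsum_comm]; simp only [hsplit]
    _ = _ := by simp only [ENNReal.tsum_ite_le_eq_sum_range, ENNReal.tsum_ite_le_eq_tsum_add]

lemma ofReal_mul_sq_sub_le_sum_Ico {p : ℕ → ℝ} (hp : ∀ i, 0 ≤ p i) (f : ℕ → ℝ) {j k : ℕ}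
    (hjk : j ≤ k) :
    ENNReal.ofReal (p j * p k * (f k - f j) ^ 2) ≤
      ∑ i ∈ Ico j k, ENNReal.ofReal (p j * p k * ((k : ℝ) - j)) *
        ENNReal.ofReal ((f (i + 1) - f i) ^ 2) := by
  have hpjk : 0 ≤ p j * p k := mul_nonneg (hp j) (hp k)
  have hkj : (0 : ℝ) ≤ k - j := sub_nonneg.mpr (Nat.cast_le.mpr hjk)
  simp_rw [← ENNReal.ofReal_mul (mul_nonneg hpjk hkj)]
  rw [← ENNReal.ofReal_sum_of_nonneg fun i _ ↦ by positivity, ← Finset.mul_sum,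
    mul_assoc (p j * p k)]
  refine ENNReal.ofReal_le_ofReal (mul_le_mul_of_nonneg_left ?_ hpjk)
  simpa [Nat.cast_sub hjk] using sq_sub_le_mul_sum_Ico_sq_sub f hjk

lemma tsum_mul_sub_sq_le_of_kernel_le {p f w : ℕ → ℝ} (hp : ∀ i, 0 ≤ p i) (hp1 : HasSum p 1)
    (hf : Summable fun i ↦ p i * f i ^ 2) (hw : ∀ i, 0 ≤ w i)
    (hwf : Summable fun i ↦ w i * (f (i + 1) - f i) ^ 2)
    (hK : ∀ i, ∑ j ∈ range (i + 1), ∑' t,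
      ENNReal.ofReal (p j * p (t + (i + 1)) * (((t + (i + 1) : ℕ) : ℝ) - j)) ≤
        ENNReal.ofReal (w i)) :
    ∑' k, p k * (f k - ∑' j, p j * f j) ^ 2 ≤ ∑' i, w i * (f (i + 1) - f i) ^ 2 := by
  have hwf0 : 0 ≤ ∑' i, w i * (f (i + 1) - f i) ^ 2 :=
    tsum_nonneg fun i ↦ mul_nonneg (hw i) (sq_nonneg _)
  suffices ENNReal.ofReal (2 * ∑' k, p k * (f k - ∑' j, p j * f j) ^ 2) ≤
      ENNReal.ofReal (2 * ∑' i, w i * (f (i + 1) - f i) ^ 2) by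
    have := (ENNReal.ofReal_le_ofReal_iff (by positivity)).1 this
    linarith
  calc ENNReal.ofReal (2 * ∑' k, p k * (f k - ∑' j, p j * f j) ^ 2)
      = ∑' j, ∑' k, ENNReal.ofReal (p j * p k * (f k - f j) ^ 2) :=
        ofReal_two_mul_tsum_mul_sub_sq hp hp1 hf
    _ = 2 * ∑' j, ∑' k,
          if j < k then ENNReal.ofReal (p j * p k * (f k - f j) ^ 2) else 0 :=
        ENNReal.tsum_tsum_eq_two_mul_tsum_tsum_ite_lt (fun j k ↦ by ring_nf) (fun j ↦ by simp)
    _ ≤ 2 * ∑' j, ∑' k, ∑ i ∈ Ico j k, ENNReal.ofReal (p j * p k * ((k : ℝ) - j)) *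
          ENNReal.ofReal ((f (i + 1) - f i) ^ 2) := by
        gcongr with j k
        split_ifs with hjk
        · exact ofReal_mul_sq_sub_le_sum_Ico hp f hjk.le
        · exact bot_le
    _ ≤ 2 * ∑' i, ENNReal.ofReal (w i) * ENNReal.ofReal ((f (i + 1) - f i) ^ 2) := by
        rw [ENNReal.tsum_tsum_sum_Ico_comm]
        simp only [ENNReal.tsum_mul_right, ← Finset.sum_mul]
        gcongr with i
        exact hK i
    _ = ENNReal.ofReal (2 * ∑' i, w i * (f (i + 1) - f i) ^ 2) := by
        rw [ENNReal.ofReal_mul zero_le_two, ENNReal.ofReal_ofNat,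
          ENNReal.ofReal_tsum_of_nonneg (fun i ↦ mul_nonneg (hw i) (sq_nonneg _)) hwf]
        simp only [ENNReal.ofReal_mul (hw _)]

noncomputable def poissonWeight (M : ℝ) (k : ℕ) : ℝ := M ^ k * Real.exp (-M) / k.factorial

lemma poissonWeight_nonneg {M : ℝ} (hM : 0 ≤ M) (k : ℕ) : 0 ≤ poissonWeight M k := by
  unfold poissonWeight; positivity

lemma hasSum_poissonWeight (M : ℝ) : HasSum (poissonWeight M) 1 := by
  have := (NormedSpace.expSeries_div_hasSum_exp M).mul_right (Real.exp (-M))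
  rw [← Real.exp_eq_exp_ℝ, ← Real.exp_add, add_neg_cancel, Real.exp_zero] at this
  exact this.congr_fun fun k ↦ by unfold poissonWeight; ring

lemma poissonWeight_succ (M : ℝ) (k : ℕ) :
    (k + 1) * poissonWeight M (k + 1) = M * poissonWeight M k := by
  unfold poissonWeight
  rw [Nat.factorial_succ, Nat.cast_mul, Nat.cast_succ]
  field_simp
  ring

lemma summable_poissonWeight_mul_pow (M c : ℝ) :
    Summable fun k ↦ poissonWeight M k * c ^ k :=
  ((Real.summable_pow_div_factorial (M * c)).mul_left (Real.exp (-M))).congr fun k ↦ by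
    unfold poissonWeight; ring

lemma hasSum_poissonWeight_tail_mul_sub (M : ℝ) (i j : ℕ) :
    HasSum (fun t ↦ poissonWeight M (t + (i + 1)) * (((t + (i + 1) : ℕ) : ℝ) - j))
      (M * ∑' t, poissonWeight M (t + i) - j * ∑' t, poissonWeight M (t + (i + 1))) := by
  have hp := (hasSum_poissonWeight M).summable
  have hmul : HasSum (fun t ↦ poissonWeight M (t + (i + 1)) * ((t + (i + 1) : ℕ) : ℝ))
      (M * ∑' t, poissonWeight M (t + i)) :=
    (((summable_nat_add_iff i).2 hp).hasSum.mul_left M).congr_fun fun t ↦ by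
      rw [← add_assoc, ← poissonWeight_succ, mul_comm]; push_cast; rfl
  exact (hmul.sub (((summable_nat_add_iff (i + 1)).2 hp).hasSum.mul_left (j : ℝ))).congr_fun
    fun t ↦ by ring

/-- The covariance kernel of the Poisson law, computed from `k p k = M p (k - 1)`. -/
lemma sum_range_poissonWeight_mul_tsum (M : ℝ) (i : ℕ) :
    ∑ j ∈ range (i + 1), poissonWeight M j *
        ∑' t, poissonWeight M (t + (i + 1)) * (((t + (i + 1) : ℕ) : ℝ) - j) =
      M * poissonWeight M i := by
  have hp := hasSum_poissonWeight M
  have hhead : ∑ j ∈ range (i + 1), poissonWeight M j * j =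
      M * ∑ j ∈ range i, poissonWeight M j := by
    rw [Finset.sum_range_succ', Finset.mul_sum]
    simp_rw [mul_comm (poissonWeight M _), Nat.cast_succ, poissonWeight_succ]
    simp
  have hsplit (k : ℕ) : ∑ j ∈ range k, poissonWeight M j + ∑' t, poissonWeight M (t + k) = 1 :=
    (hp.summable.sum_add_tsum_nat_add k).trans hp.tsum_eq
  simp_rw [(hasSum_poissonWeight_tail_mul_sub M i _).tsum_eq, mul_sub, Finset.sum_sub_distrib,
    ← mul_assoc, ← Finset.sum_mul]
  have hi := hsplit i
  have hi1 := hsplit (i + 1)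
  rw [Finset.sum_range_succ] at hi1
  rw [hhead, Finset.sum_range_succ]
  linear_combination M * (∑ j ∈ range i, poissonWeight M j + poissonWeight M i) * hi -
    M * (∑ j ∈ range i, poissonWeight M j) * hi1

lemma sum_range_tsum_ofReal_poissonWeight_mul {M : ℝ} (hM : 0 ≤ M) (i : ℕ) :
    ∑ j ∈ range (i + 1), ∑' t, ENNReal.ofReal (poissonWeight M j *
        poissonWeight M (t + (i + 1)) * (((t + (i + 1) : ℕ) : ℝ) - j)) =
      ENNReal.ofReal (M * poissonWeight M i) := by
  have hnonneg (j t : ℕ) (hj : j ∈ range (i + 1)) :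
      0 ≤ poissonWeight M (t + (i + 1)) * (((t + (i + 1) : ℕ) : ℝ) - j) := by
    have : (j : ℝ) ≤ i := by simp at hj; exact_mod_cast hj
    have := poissonWeight_nonneg hM (t + (i + 1))
    push_cast; nlinarith
  rw [← sum_range_poissonWeight_mul_tsum, ENNReal.ofReal_sum_of_nonneg fun j hj ↦
    mul_nonneg (poissonWeight_nonneg hM j) (tsum_nonneg fun t ↦ hnonneg j t hj)]
  refine Finset.sum_congr rfl fun j hj ↦ ?_
  rw [← tsum_mul_left, ENNReal.ofReal_tsum_of_nonneg
    (fun t ↦ mul_nonneg (poissonWeight_nonneg hM j) (hnonneg j t hj))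
    ((hasSum_poissonWeight_tail_mul_sub M i j).summable.mul_left _)]
  simp only [mul_assoc]

theorem tsum_poissonWeight_mul_sub_sq_le {M : ℝ} (hM : 0 ≤ M) {f : ℕ → ℝ}
    (hf : Summable fun k ↦ poissonWeight M k * f k ^ 2)
    (hdf : Summable fun k ↦ poissonWeight M k * (f (k + 1) - f k) ^ 2) :
    ∑' k, poissonWeight M k * (f k - ∑' j, poissonWeight M j * f j) ^ 2 ≤
      M * ∑' k, poissonWeight M k * (f (k + 1) - f k) ^ 2 := by
  rw [← tsum_mul_left]
  simp_rw [← mul_assoc]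
  exact tsum_mul_sub_sq_le_of_kernel_le (poissonWeight_nonneg hM) (hasSum_poissonWeight M) hf
    (fun i ↦ mul_nonneg hM (poissonWeight_nonneg hM i))
    (by simpa only [mul_assoc] using hdf.mul_left M)
    fun i ↦ (sum_range_tsum_ofReal_poissonWeight_mul hM i).le

lemma summable_poissonWeight_mul_one_div_sq {M : ℝ} (hM : 0 ≤ M) :
    Summable fun k ↦ poissonWeight M k * (1 / ((k : ℝ) + 1)) ^ 2 :=
  (hasSum_poissonWeight M).summable.of_nonneg_of_le
    (fun k ↦ mul_nonneg (poissonWeight_nonneg hM k) (by positivity)) fun k ↦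
    mul_le_of_le_one_right (poissonWeight_nonneg hM k) (pow_le_one₀ (by positivity)
      (div_le_one_of_le₀ (by simp) (by positivity)))

lemma mul_tsum_poissonWeight_mul_one_div_sq_le {M : ℝ} (hM : 0 < M) :
    M * ∑' k, poissonWeight M k * (1 / ((k : ℝ) + 1)) ^ 2 ≤ 2 / M := by
  have hp := hasSum_poissonWeight M
  have hpoint (k : ℕ) : M ^ 2 * (poissonWeight M k * (1 / ((k : ℝ) + 1)) ^ 2) ≤
      2 * poissonWeight M (k + 2) := by
    have h1 := poissonWeight_succ M k
    have h2 := poissonWeight_succ M (k + 1)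
    have h0 := poissonWeight_nonneg hM.le (k + 2)
    push_cast at h2
    have key : M ^ 2 * poissonWeight M k = (k + 1) * (k + 2) * poissonWeight M (k + 2) := by
      linear_combination (-M) * h1 - ((k : ℝ) + 1) * h2
    rw [div_pow, one_pow, mul_one_div, mul_div_assoc', div_le_iff₀ (by positivity), key]
    nlinarith [mul_nonneg h0 k.cast_nonneg]
  have htail : ∑' k, poissonWeight M (k + 2) ≤ 1 := by
    rw [← (hp.summable.sum_add_tsum_nat_add 2).trans hp.tsum_eq, le_add_iff_nonneg_left]
    exact Finset.sum_nonneg fun k _ ↦ poissonWeight_nonneg hM.le k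
  have : M ^ 2 * ∑' k, poissonWeight M k * (1 / ((k : ℝ) + 1)) ^ 2 ≤ 2 := by
    rw [← tsum_mul_left]
    calc _ ≤ ∑' k, 2 * poissonWeight M (k + 2) :=
          ((summable_poissonWeight_mul_one_div_sq hM.le).mul_left _).tsum_le_tsum hpoint
            (((summable_nat_add_iff 2).2 hp.summable).mul_left 2)
      _ ≤ 2 := by rw [tsum_mul_left]; linarith
  rw [le_div_iff₀ hM]
  linarith

lemma harmonicR_succ_sub (k : ℕ) : harmonicR (k + 1) - harmonicR k = 1 / ((k : ℝ) + 1) := by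
  simp [harmonicR, Finset.sum_range_succ]

lemma harmonicR_le (n : ℕ) : harmonicR n ≤ n := by
  calc harmonicR n ≤ ∑ _i ∈ range n, (1 : ℝ) :=
        Finset.sum_le_sum fun i _ ↦ div_le_one_of_le₀ (by simp) (by positivity)
    _ = n := by simp

lemma summable_poissonWeight_mul_harmonicR_sq (M : ℝ) (hM : 0 ≤ M) :
    Summable fun k ↦ poissonWeight M k * harmonicR k ^ 2 := by
  refine (summable_poissonWeight_mul_pow M 4).of_nonneg_of_le
    (fun k ↦ mul_nonneg (poissonWeight_nonneg hM k) (sq_nonneg _)) fun k ↦ ?_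
  refine mul_le_mul_of_nonneg_left ?_ (poissonWeight_nonneg hM k)
  have hH : 0 ≤ harmonicR k := Finset.sum_nonneg fun i _ ↦ by positivity
  calc harmonicR k ^ 2 ≤ ((2 : ℝ) ^ k) ^ 2 := by
        gcongr
        exact (harmonicR_le k).trans (by exact_mod_cast (Nat.lt_two_pow_self).le)
    _ = 4 ^ k := by rw [← pow_mul, mul_comm, pow_mul]; norm_num

/-- For a Poisson random variable `Y` with mean `M > 0` (so `P(Y = k) =
M^k e^{-M}/k!`), the variance of the harmonic number `H_Y` is at most `2/M`. -/
theorem poisson_harmonic_variance_le (M : ℝ) (hM : 0 < M) :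
    (∑' k : ℕ, (M ^ k * Real.exp (-M) / Nat.factorial k) *
        (harmonicR k - ∑' j : ℕ, (M ^ j * Real.exp (-M) / Nat.factorial j) * harmonicR j) ^ 2)
      ≤ 2 / M := by
  calc _ ≤ M * ∑' k, poissonWeight M k * (harmonicR (k + 1) - harmonicR k) ^ 2 :=
        tsum_poissonWeight_mul_sub_sq_le hM.le (summable_poissonWeight_mul_harmonicR_sq M hM.le)
          (by simpa only [harmonicR_succ_sub] using summable_poissonWeight_mul_one_div_sq hM.le)
    _ = M * ∑' k, poissonWeight M k * (1 / ((k : ℝ) + 1)) ^ 2 := by simp_rw [harmonicR_succ_sub]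
    _ ≤ 2 / M := mul_tsum_poissonWeight_mul_one_div_sq_le hM
end

section
/- Gaussian CDF Lipschitz merging bound: Let μ, μ' ∈ ℝ and σ, σ' > 0, and let Φ be the standard Gaussian CDF with density φ. Then sup_{y∈ℝ} |Φ((y−μ')/σ') − Φ((y−μ)/σ)| ≤ (|μ'−μ| + √((μ'−μ)² + |log(σ/σ')|·|σ'²−σ²|)) / (σ+σ') ≤ 2|μ'−μ|/(σ+σ') + √(|log(σ/σ')|·|σ'²−σ²|)/(σ+σ'). -/
/-- The standard Gaussian cumulative distribution function. -/
noncomputable def stdGaussianCDF (x : ℝ) : ℝ :=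
  ∫ t in Set.Iic x, Real.exp (-t ^ 2 / 2) / Real.sqrt (2 * Real.pi)

/-!
By the triangle inequality the difference splits into a change of mean at the fixed scale `σ` and
a change of scale at a fixed point; by symmetry `σ' ≤ σ`. Since `φ ≤ 1/2`, the change of mean costs
at most `|μ' - μ| / (2σ) ≤ |μ' - μ| / (σ + σ')`. For the change of scale put `ρ = σ / σ' ≥ 1`; by
the symmetry of `φ` it suffices to bound `Φ(ρt) - Φ(t)` for `t ≥ 0`. As `φ` decreases on
`[0, ∞)`, this is at most `(ρ - 1) t φ(t) ≤ (ρ - 1) / √(2πe)`, and it is also at most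
`1 - Φ(0) = 1/2`. The first bound is below `√(log ρ (ρ² - 1)) / (ρ + 1)` when `ρ ≤ 3`, using
`log ρ ≥ 1 - 1/ρ` and `2πe > 12`, and the second when `ρ ≥ 3`, using `log 3 > 1`.
-/

open MeasureTheory Set Real

noncomputable def stdGaussianPDF (t : ℝ) : ℝ := exp (-t ^ 2 / 2) / √(2 * π)

lemma stdGaussianCDF_eq_integral (x : ℝ) : stdGaussianCDF x = ∫ t in Iic x, stdGaussianPDF t := rfl

lemma stdGaussianPDF_eq : stdGaussianPDF = fun t => exp (-(1 / 2) * t ^ 2) / √(2 * π) := by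
  ext t
  rw [stdGaussianPDF, neg_div, neg_mul, one_div_mul_eq_div]

lemma two_le_sqrt_two_pi : 2 ≤ √(2 * π) :=
  le_sqrt_of_sq_le (by nlinarith [pi_gt_three])

lemma stdGaussianPDF_nonneg (t : ℝ) : 0 ≤ stdGaussianPDF t := by
  unfold stdGaussianPDF; positivity

lemma stdGaussianPDF_neg (t : ℝ) : stdGaussianPDF (-t) = stdGaussianPDF t := by
  rw [stdGaussianPDF, stdGaussianPDF, neg_sq]

lemma stdGaussianPDF_le (t : ℝ) : stdGaussianPDF t ≤ (√(2 * π))⁻¹ := by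
  rw [stdGaussianPDF, div_eq_mul_inv]
  exact mul_le_of_le_one_left (by positivity) (exp_le_one_iff.2 (by nlinarith [sq_nonneg t]))

lemma stdGaussianPDF_antitoneOn : AntitoneOn stdGaussianPDF (Ici 0) := by
  intro s hs t _ hst
  unfold stdGaussianPDF
  gcongr

lemma integrable_stdGaussianPDF : Integrable stdGaussianPDF := by
  rw [stdGaussianPDF_eq]
  exact (integrable_exp_neg_mul_sq (by norm_num)).div_const _

lemma integral_stdGaussianPDF : ∫ t, stdGaussianPDF t = 1 := by
  rw [stdGaussianPDF_eq, integral_div, integral_gaussian, show π / (1 / 2) = 2 * π by ring,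
    div_self (by positivity)]

lemma stdGaussianCDF_sub_eq_integral {a b : ℝ} (hab : a ≤ b) :
    stdGaussianCDF b - stdGaussianCDF a = ∫ t in Ioc a b, stdGaussianPDF t := by
  rw [stdGaussianCDF_eq_integral, stdGaussianCDF_eq_integral,
    intervalIntegral.integral_Iic_sub_Iic integrable_stdGaussianPDF.integrableOn
      integrable_stdGaussianPDF.integrableOn, intervalIntegral.integral_of_le hab]

lemma stdGaussianCDF_sub_le_mul {a b C : ℝ} (hab : a ≤ b)
    (h : ∀ t ∈ Ioc a b, stdGaussianPDF t ≤ C) :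
    stdGaussianCDF b - stdGaussianCDF a ≤ (b - a) * C := by
  rw [stdGaussianCDF_sub_eq_integral hab]
  calc ∫ t in Ioc a b, stdGaussianPDF t ≤ ∫ _ in Ioc a b, C :=
        setIntegral_mono_on integrable_stdGaussianPDF.integrableOn
          (integrableOn_const measure_Ioc_lt_top.ne) measurableSet_Ioc h
    _ = (b - a) * C := by rw [setIntegral_const, volume_real_Ioc_of_le hab, smul_eq_mul]

lemma stdGaussianCDF_nonneg (x : ℝ) : 0 ≤ stdGaussianCDF x :=
  setIntegral_nonneg measurableSet_Iic fun t _ => stdGaussianPDF_nonneg t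

lemma monotone_stdGaussianCDF : Monotone stdGaussianCDF := fun a b hab => by
  rw [← sub_nonneg, stdGaussianCDF_sub_eq_integral hab]
  exact setIntegral_nonneg measurableSet_Ioc fun t _ => stdGaussianPDF_nonneg t

lemma stdGaussianCDF_neg (x : ℝ) : stdGaussianCDF (-x) = 1 - stdGaussianCDF x := by
  have h_tail : stdGaussianCDF (-x) = ∫ t in Ioi x, stdGaussianPDF t := by
    rw [stdGaussianCDF_eq_integral]
    simpa only [stdGaussianPDF_neg, neg_neg] using integral_comp_neg_Iic (-x) stdGaussianPDF
  have h_split := intervalIntegral.integral_Iic_add_Ioi (b := x)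
    integrable_stdGaussianPDF.integrableOn integrable_stdGaussianPDF.integrableOn
  rw [integral_stdGaussianPDF, ← stdGaussianCDF_eq_integral] at h_split
  linarith

lemma stdGaussianCDF_zero : stdGaussianCDF 0 = 1 / 2 := by
  have := stdGaussianCDF_neg 0
  rw [neg_zero] at this
  linarith

lemma stdGaussianCDF_le_one (x : ℝ) : stdGaussianCDF x ≤ 1 := by
  have := stdGaussianCDF_neg (-x)
  rw [neg_neg] at this
  linarith [stdGaussianCDF_nonneg (-x)]

lemma abs_stdGaussianCDF_sub_le (a b : ℝ) :
    |stdGaussianCDF a - stdGaussianCDF b| ≤ |a - b| / 2 := by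
  wlog hab : b ≤ a generalizing a b
  · rw [abs_sub_comm, abs_sub_comm a]; exact this b a (le_of_not_ge hab)
  rw [abs_of_nonneg (sub_nonneg.2 (monotone_stdGaussianCDF hab)), abs_of_nonneg (sub_nonneg.2 hab),
    div_eq_mul_inv]
  exact stdGaussianCDF_sub_le_mul hab fun t _ =>
    (stdGaussianPDF_le t).trans (inv_anti₀ two_pos two_le_sqrt_two_pi)

lemma mul_exp_neg_sq_div_two_le (t : ℝ) : t * exp (-t ^ 2 / 2) ≤ exp (-1 / 2) := by
  have h : t ≤ exp ((t ^ 2 - 1) / 2) := by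
    nlinarith [add_one_le_exp ((t ^ 2 - 1) / 2), sq_nonneg (t - 1)]
  calc t * exp (-t ^ 2 / 2) ≤ exp ((t ^ 2 - 1) / 2) * exp (-t ^ 2 / 2) := by gcongr
    _ = exp (-1 / 2) := by rw [← exp_add]; ring_nf

lemma stdGaussianCDF_sub_le_half {t : ℝ} (ht : 0 ≤ t) (s : ℝ) :
    stdGaussianCDF s - stdGaussianCDF t ≤ 1 / 2 := by
  linarith [stdGaussianCDF_le_one s, monotone_stdGaussianCDF ht, stdGaussianCDF_zero]

lemma stdGaussianCDF_mul_sub_le {ρ t : ℝ} (hρ : 1 ≤ ρ) (ht : 0 ≤ t) :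
    stdGaussianCDF (ρ * t) - stdGaussianCDF t ≤ (ρ - 1) * (exp (-1 / 2) / √(2 * π)) := by
  have htρ : t ≤ ρ * t := le_mul_of_one_le_left ht hρ
  calc stdGaussianCDF (ρ * t) - stdGaussianCDF t ≤ (ρ * t - t) * stdGaussianPDF t :=
        stdGaussianCDF_sub_le_mul htρ fun s hs =>
          stdGaussianPDF_antitoneOn ht (ht.trans hs.1.le) hs.1.le
    _ = (ρ - 1) * (t * exp (-t ^ 2 / 2) / √(2 * π)) := by rw [stdGaussianPDF]; ring
    _ ≤ (ρ - 1) * (exp (-1 / 2) / √(2 * π)) := by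
        gcongr
        exact mul_exp_neg_sq_div_two_le t

lemma exp_neg_half_div_sqrt_two_pi_sq_le : (exp (-1 / 2) / √(2 * π)) ^ 2 ≤ 1 / 12 := by
  rw [div_pow, sq_sqrt (by positivity), ← exp_nat_mul, div_le_iff₀ (by positivity)]
  have h_exp : exp (2 * (-1 / 2)) * 2 < 1 := by
    rw [show (2 : ℝ) * (-1 / 2) = -1 by norm_num, exp_neg, inv_mul_lt_iff₀ (exp_pos 1), mul_one]
    exact exp_one_gt_two
  nlinarith [pi_gt_three, exp_pos (2 * (-1 / 2) : ℝ)]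

lemma one_half_le_sqrt_log_mul_div_of_three_le {ρ : ℝ} (hρ : 3 ≤ ρ) :
    1 / 2 ≤ √(log ρ * (ρ ^ 2 - 1)) / (ρ + 1) := by
  have hlog : 1 ≤ log ρ := by
    rw [le_log_iff_exp_le (by linarith)]
    linarith [exp_one_lt_three]
  rw [le_div_iff₀ (by linarith)]
  apply le_sqrt_of_sq_le
  nlinarith [mul_le_mul_of_nonneg_right hlog (by nlinarith : (0 : ℝ) ≤ ρ ^ 2 - 1)]

lemma mul_le_sqrt_log_mul_div_of_le_three {ρ : ℝ} (hρ₁ : 1 ≤ ρ) (hρ₃ : ρ ≤ 3) :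
    (ρ - 1) * (exp (-1 / 2) / √(2 * π)) ≤ √(log ρ * (ρ ^ 2 - 1)) / (ρ + 1) := by
  have hρ : 0 < ρ := by linarith
  have h_sq : 0 ≤ ρ ^ 2 - 1 := by nlinarith
  have h_ratio : (ρ - 1) * (ρ + 1) / 12 ≤ 1 - ρ⁻¹ := by
    rw [show 1 - ρ⁻¹ = (ρ - 1) / ρ by field_simp, div_le_div_iff₀ (by norm_num) hρ]
    nlinarith
  rw [le_div_iff₀ (by linarith)]
  apply le_sqrt_of_sq_le
  calc ((ρ - 1) * (exp (-1 / 2) / √(2 * π)) * (ρ + 1)) ^ 2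
      = (ρ ^ 2 - 1) ^ 2 * (exp (-1 / 2) / √(2 * π)) ^ 2 := by ring
    _ ≤ (ρ ^ 2 - 1) ^ 2 * (1 / 12) := by gcongr; exact exp_neg_half_div_sqrt_two_pi_sq_le
    _ = (ρ - 1) * (ρ + 1) / 12 * (ρ ^ 2 - 1) := by ring
    _ ≤ log ρ * (ρ ^ 2 - 1) := by
        gcongr
        exact h_ratio.trans (one_sub_inv_le_log_of_pos hρ)

lemma abs_stdGaussianCDF_mul_sub_le {ρ : ℝ} (hρ : 1 ≤ ρ) (t : ℝ) :
    |stdGaussianCDF (ρ * t) - stdGaussianCDF t| ≤ √(log ρ * (ρ ^ 2 - 1)) / (ρ + 1) := by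
  wlog ht : 0 ≤ t generalizing t
  · have h := this (-t) (by linarith)
    rwa [mul_neg, stdGaussianCDF_neg, stdGaussianCDF_neg, sub_sub_sub_cancel_left,
      abs_sub_comm] at h
  rw [abs_of_nonneg (sub_nonneg.2 (monotone_stdGaussianCDF (le_mul_of_one_le_left ht hρ)))]
  rcases le_total ρ 3 with hρ₃ | hρ₃
  · exact (stdGaussianCDF_mul_sub_le hρ ht).trans (mul_le_sqrt_log_mul_div_of_le_three hρ hρ₃)
  · exact (stdGaussianCDF_sub_le_half ht _).trans (one_half_le_sqrt_log_mul_div_of_three_le hρ₃)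

lemma abs_stdGaussianCDF_div_sub_div_le {σ σ' : ℝ} (hσ' : 0 < σ') (hle : σ' ≤ σ) (x : ℝ) :
    |stdGaussianCDF (x / σ') - stdGaussianCDF (x / σ)|
      ≤ √(log (σ / σ') * (σ ^ 2 - σ' ^ 2)) / (σ + σ') := by
  have hσ : 0 < σ := hσ'.trans_le hle
  have h_bound : √(log (σ / σ') * ((σ / σ') ^ 2 - 1)) / (σ / σ' + 1)
      = √(log (σ / σ') * (σ ^ 2 - σ' ^ 2)) / (σ + σ') := by
    have h_nonneg : 0 ≤ log (σ / σ') * (σ ^ 2 - σ' ^ 2) :=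
      mul_nonneg (log_nonneg ((one_le_div hσ').2 hle)) (by nlinarith)
    rw [show log (σ / σ') * ((σ / σ') ^ 2 - 1) = log (σ / σ') * (σ ^ 2 - σ' ^ 2) / σ' ^ 2 by
        field_simp, sqrt_div h_nonneg, sqrt_sq hσ'.le, div_div, mul_add, mul_div_cancel₀ _ hσ'.ne',
      mul_one]
  rw [← h_bound, show x / σ' = σ / σ' * (x / σ) by field_simp]
  exact abs_stdGaussianCDF_mul_sub_le ((one_le_div hσ').2 hle) _

lemma abs_stdGaussianCDF_standardize_sub_le_of_le (μ μ' : ℝ) {σ σ' : ℝ} (hσ' : 0 < σ')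
    (hle : σ' ≤ σ) (y : ℝ) :
    |stdGaussianCDF ((y - μ') / σ') - stdGaussianCDF ((y - μ) / σ)|
      ≤ (|μ' - μ| + √(|log (σ / σ')| * |σ' ^ 2 - σ ^ 2|)) / (σ + σ') := by
  have hσ : 0 < σ := hσ'.trans_le hle
  have h_shift : |stdGaussianCDF ((y - μ') / σ) - stdGaussianCDF ((y - μ) / σ)|
      ≤ |μ' - μ| / (σ + σ') :=
    calc _ ≤ |(y - μ') / σ - (y - μ) / σ| / 2 := abs_stdGaussianCDF_sub_le _ _
      _ = |μ' - μ| / (2 * σ) := by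
          rw [← sub_div, abs_div, abs_of_pos hσ, abs_sub_comm, div_div, mul_comm]; ring_nf
      _ ≤ |μ' - μ| / (σ + σ') := by gcongr; linarith
  calc _ ≤ |stdGaussianCDF ((y - μ') / σ') - stdGaussianCDF ((y - μ') / σ)|
        + |stdGaussianCDF ((y - μ') / σ) - stdGaussianCDF ((y - μ) / σ)| := abs_sub_le _ _ _
    _ ≤ √(log (σ / σ') * (σ ^ 2 - σ' ^ 2)) / (σ + σ') + |μ' - μ| / (σ + σ') :=
        add_le_add (abs_stdGaussianCDF_div_sub_div_le hσ' hle _) h_shift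
    _ = (|μ' - μ| + √(|log (σ / σ')| * |σ' ^ 2 - σ ^ 2|)) / (σ + σ') := by
        rw [abs_of_nonneg (log_nonneg ((one_le_div hσ').2 hle)),
          abs_of_nonpos (a := σ' ^ 2 - σ ^ 2) (by nlinarith), neg_sub]
        ring

lemma abs_stdGaussianCDF_standardize_sub_le (μ μ' : ℝ) {σ σ' : ℝ} (hσ : 0 < σ) (hσ' : 0 < σ')
    (y : ℝ) :
    |stdGaussianCDF ((y - μ') / σ') - stdGaussianCDF ((y - μ) / σ)|
      ≤ (|μ' - μ| + √(|log (σ / σ')| * |σ' ^ 2 - σ ^ 2|)) / (σ + σ') := by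
  rcases le_total σ' σ with hle | hle
  · exact abs_stdGaussianCDF_standardize_sub_le_of_le μ μ' hσ' hle y
  · have h := abs_stdGaussianCDF_standardize_sub_le_of_le μ' μ hσ hle y
    rwa [abs_sub_comm, abs_sub_comm μ, abs_sub_comm (σ ^ 2), add_comm σ', ← inv_div σ σ', log_inv,
      abs_neg] at h

lemma sqrt_add_le_add_sqrt {x y : ℝ} (hx : 0 ≤ x) (hy : 0 ≤ y) : √(x + y) ≤ √x + √y := by
  rw [sqrt_le_left (by positivity)]
  nlinarith [sq_sqrt hx, sq_sqrt hy, sqrt_nonneg x, sqrt_nonneg y]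

/-- Gaussian CDF Lipschitz merging bound: for `μ, μ' ∈ ℝ` and `σ, σ' > 0`,
`sup_y |Φ((y-μ')/σ') - Φ((y-μ)/σ)|` is bounded by
`(|μ'-μ| + √((μ'-μ)² + |log(σ/σ')|·|σ'²-σ²|))/(σ+σ')`, which in turn is at most
`2|μ'-μ|/(σ+σ') + √(|log(σ/σ')|·|σ'²-σ²|)/(σ+σ')`. -/
theorem gaussian_cdf_merge (μ μ' σ σ' : ℝ) (hσ : 0 < σ) (hσ' : 0 < σ') :
    (∀ y : ℝ, |stdGaussianCDF ((y - μ') / σ') - stdGaussianCDF ((y - μ) / σ)|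
      ≤ (|μ' - μ| + Real.sqrt ((μ' - μ) ^ 2 + |Real.log (σ / σ')| * |σ' ^ 2 - σ ^ 2|))
          / (σ + σ')) ∧
    (|μ' - μ| + Real.sqrt ((μ' - μ) ^ 2 + |Real.log (σ / σ')| * |σ' ^ 2 - σ ^ 2|))
        / (σ + σ')
      ≤ 2 * |μ' - μ| / (σ + σ')
        + Real.sqrt (|Real.log (σ / σ')| * |σ' ^ 2 - σ ^ 2|) / (σ + σ') := by
  set L := |log (σ / σ')| * |σ' ^ 2 - σ ^ 2|
  have hL : 0 ≤ L := by positivity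
  refine ⟨fun y => (abs_stdGaussianCDF_standardize_sub_le μ μ' hσ hσ' y).trans ?_, ?_⟩
  · gcongr
    exact le_add_of_nonneg_left (sq_nonneg _)
  · calc (|μ' - μ| + √((μ' - μ) ^ 2 + L)) / (σ + σ')
        ≤ (|μ' - μ| + (√((μ' - μ) ^ 2) + √L)) / (σ + σ') := by
          gcongr; exact sqrt_add_le_add_sqrt (sq_nonneg _) hL
      _ = 2 * |μ' - μ| / (σ + σ') + √L / (σ + σ') := by rw [sqrt_sq_eq_abs]; ring
end
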